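/- arXiv:1907.02515 — 2 statements merged into one kernel-verified Lean document; each statement's English description precedes it below -/
import Mathlib

section
/- Under the admissibility hypothesis (unique solvability of the integral equation in Y_Z for every y ∈ Y₁), for all t ≥ τ ≥ 1 the restriction T(t,τ)|_{U(τ)} : U(τ) → U(t) is a bijection, where U(τ) = T(τ,1)Z. -/
open Set MeasureTheory

/-- If for each `y ∈ Y₁` there is a unique `x ∈ Y_Z` solving the integral equation,
then for all `t ≥ τ ≥ 1` the restriction `T(t,τ)|_{U(τ)} : U(τ) → U(t)`
is a bijection, where `U(τ) = T(τ,1)Z`. -/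
theorem stmt10 {X : Type*} [NormedAddCommGroup X] [NormedSpace ℝ X] [CompleteSpace X]
    (N : ℝ → X → ℝ) (T : ℝ → ℝ → X →L[ℝ] X) (Z : Submodule ℝ X) (hZ : IsClosed (Z : Set X))
    (C ε : ℝ) (hC : 0 < C) (hε : 0 ≤ ε)
    (hadd : ∀ t : ℝ, ∀ v w : X, N t (v + w) ≤ N t v + N t w)
    (hsmul : ∀ t : ℝ, ∀ c : ℝ, ∀ v : X, N t (c • v) = |c| * N t v)
    (hlow : ∀ t : ℝ, ∀ v : X, 1 ≤ t → ‖v‖ ≤ N t v)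
    (hup : ∀ t : ℝ, ∀ v : X, 1 ≤ t → N t v ≤ C * t ^ ε * ‖v‖)
    -- evolution family
    (hid : ∀ t : ℝ, 1 ≤ t → T t t = ContinuousLinearMap.id ℝ X)
    (hcoc : ∀ τ s t : ℝ, 1 ≤ τ → τ ≤ s → s ≤ t → (T t s).comp (T s τ) = T t τ)
    (hTcont : ∀ τ : ℝ, 1 ≤ τ → ∀ v : X, ContinuousOn (fun s => T s τ v) (Ici τ))
    -- admissibility: unique solvability in `Y_Z` for each `y ∈ Y₁`
    (hadm : ∀ y : ℝ → X, AEStronglyMeasurable y (volume.restrict (Ici (1 : ℝ))) →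
      (∀ t : ℝ, 1 ≤ t → IntervalIntegrable (fun s => N s (y s)) volume t (t + 1)) →
      (∃ yL : ℝ, ∀ t : ℝ, 1 ≤ t → ∫ s in t..t + 1, N s (y s) ≤ yL) →
      ∃ x : ℝ → X,
        (ContinuousOn x (Ici (1 : ℝ)) ∧ (∃ Mb : ℝ, ∀ t : ℝ, 1 ≤ t → N t (x t) ≤ Mb) ∧
          x 1 ∈ Z ∧ ∀ τ t : ℝ, 1 ≤ τ → τ ≤ t →
            x t = T t τ (x τ) + ∫ s in τ..t, (1 / s) • T t s (y s)) ∧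
        ∀ x' : ℝ → X,
          (ContinuousOn x' (Ici (1 : ℝ)) ∧ (∃ Mb : ℝ, ∀ t : ℝ, 1 ≤ t → N t (x' t) ≤ Mb) ∧
            x' 1 ∈ Z ∧ ∀ τ t : ℝ, 1 ≤ τ → τ ≤ t →
              x' t = T t τ (x' τ) + ∫ s in τ..t, (1 / s) • T t s (y s)) →
          ∀ t : ℝ, 1 ≤ t → x' t = x t) :
    ∀ τ t : ℝ, 1 ≤ τ → τ ≤ t →
      Set.BijOn (⇑(T t τ)) ((⇑(T τ 1)) '' (Z : Set X)) ((⇑(T t 1)) '' (Z : Set X)) := by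
  intro τ t hτ hτt
  have h1t : (1:ℝ) ≤ t := le_trans hτ hτt
  have hN0 : ∀ s : ℝ, N s 0 = 0 := by
    intro s
    have := hsmul s 0 0
    simpa using this  -- N s 0 = 0
  -- key injectivity lemma: z ∈ Z, T t 1 z = 0 → T τ 1 z = 0
  have key : ∀ z : X, z ∈ Z → T t 1 z = 0 → T τ 1 z = 0 := by
    intro z hz hz0
    set x : ℝ → X := fun s => T s 1 z with hx
    obtain ⟨x₀, hx₀, huniq⟩ := hadm (fun _ => (0:X)) aestronglyMeasurable_const
      (by intro t' ht'; simpa [hN0] using (intervalIntegrable_const :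
        IntervalIntegrable (fun _ : ℝ => (0:ℝ)) volume t' (t'+1)))
      ⟨0, by intro t' ht'; simp [hN0]⟩
    have hint : ∀ a b : ℝ, (∫ s in a..b, (1 / s) • T b s ((fun _ => (0:X)) s)) = 0 := by
      intro a b; simp
    -- zero function satisfies the predicate
    have hzero : (fun _ : ℝ => (0:X)) 1 ∈ Z := Z.zero_mem
    have hP0 : ContinuousOn (fun _ : ℝ => (0:X)) (Ici (1:ℝ)) ∧
        (∃ Mb : ℝ, ∀ t' : ℝ, 1 ≤ t' → N t' ((fun _ : ℝ => (0:X)) t') ≤ Mb) ∧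
        (fun _ : ℝ => (0:X)) 1 ∈ Z ∧ ∀ τ' t' : ℝ, 1 ≤ τ' → τ' ≤ t' →
          (fun _ : ℝ => (0:X)) t' = T t' τ' ((fun _ : ℝ => (0:X)) τ') +
            ∫ s in τ'..t', (1 / s) • T t' s ((fun _ => (0:X)) s) :=
      ⟨continuousOn_const, ⟨0, fun t' _ => by simp [hN0]⟩, hzero,
        fun τ' t' h1 h2 => by simp [hint]⟩
    -- x vanishes for s ≥ t
    have hxt : x t = 0 := hz0
    have hxge : ∀ s : ℝ, t ≤ s → x s = 0 := by
      intro s hs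
      have hc := hcoc 1 t s le_rfl h1t hs
      have : T s t (T t 1 z) = T s 1 z := by
        rw [← hc]; rfl
      rw [hx]; dsimp only
      rw [← this, hz0, map_zero]
    -- x is bounded
    have hxcont : ContinuousOn x (Ici (1:ℝ)) := hTcont 1 le_rfl z
    obtain ⟨M, hM⟩ := (isCompact_Icc (a := (1:ℝ)) (b := t)).exists_bound_of_continuousOn
      (hxcont.mono (fun s hs => hs.1))
    have hMb : ∃ Mb : ℝ, ∀ t' : ℝ, 1 ≤ t' → N t' (x t') ≤ Mb := by
      refine ⟨C * t ^ ε * max M 0, ?_⟩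
      intro s hs
      rcases le_total s t with hst | hts
      · have h1 : N s (x s) ≤ C * s ^ ε * ‖x s‖ := hup s (x s) hs
        have h2 : ‖x s‖ ≤ max M 0 := le_trans (hM s ⟨hs, hst⟩) (le_max_left _ _)
        have h3 : C * s ^ ε ≤ C * t ^ ε := by
          have := Real.rpow_le_rpow (le_trans zero_le_one hs) hst hε
          nlinarith
        have h4 : (0:ℝ) ≤ C * s ^ ε := by
          have := Real.rpow_nonneg (le_trans zero_le_one hs : (0:ℝ) ≤ s) ε
          positivity
        calc N s (x s) ≤ C * s ^ ε * ‖x s‖ := h1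
          _ ≤ C * s ^ ε * max M 0 := by
              exact mul_le_mul_of_nonneg_left h2 h4
          _ ≤ C * t ^ ε * max M 0 := by
              exact mul_le_mul_of_nonneg_right h3 (le_max_right _ _)
      · rw [hxge s hts, hN0]
        have h4 : (0:ℝ) ≤ C * t ^ ε := by
          have := Real.rpow_nonneg (le_trans zero_le_one h1t : (0:ℝ) ≤ t) ε
          positivity
        exact mul_nonneg h4 (le_max_right _ _)
    -- x satisfies the predicate
    have hx1 : x 1 ∈ Z := by
      have : x 1 = z := by rw [hx]; simp [hid 1 le_rfl]
      rw [this]; exact hz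
    have hPx : ContinuousOn x (Ici (1:ℝ)) ∧
        (∃ Mb : ℝ, ∀ t' : ℝ, 1 ≤ t' → N t' (x t') ≤ Mb) ∧
        x 1 ∈ Z ∧ ∀ τ' t' : ℝ, 1 ≤ τ' → τ' ≤ t' →
          x t' = T t' τ' (x τ') + ∫ s in τ'..t', (1 / s) • T t' s ((fun _ => (0:X)) s) := by
      refine ⟨hxcont, hMb, hx1, ?_⟩
      intro τ' t' h1 h2
      have hc := hcoc 1 τ' t' le_rfl h1 h2
      have : T t' τ' (T τ' 1 z) = T t' 1 z := by rw [← hc]; rfl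
      rw [hint]
      simp [hx, this]
    have e1 := huniq x hPx τ hτ
    have e2 := huniq _ hP0 τ hτ
    exact e1.trans e2.symm
  -- now build the bijection
  have hcoc1 : ∀ z : X, T t τ (T τ 1 z) = T t 1 z := by
    intro z
    have hc := hcoc 1 τ t le_rfl hτ hτt
    rw [← hc]; rfl
  refine ⟨?_, ?_, ?_⟩
  · rintro w ⟨z, hz, rfl⟩
    exact ⟨z, hz, (hcoc1 z).symm⟩
  · rintro w ⟨z1, hz1, rfl⟩ w' ⟨z2, hz2, rfl⟩ h
    have hsub : T t 1 (z1 - z2) = 0 := by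
      rw [map_sub, ← hcoc1 z1, ← hcoc1 z2, h, sub_self]
    have := key (z1 - z2) (Z.sub_mem hz1 hz2) hsub
    rw [map_sub, sub_eq_zero] at this
    exact this
  · rintro w ⟨z, hz, rfl⟩
    exact ⟨T τ 1 z, ⟨z, hz, rfl⟩, hcoc1 z⟩
end

section
/- (Lyapunov norms for nonuniform polynomial dichotomy) An evolution family T(t,τ) admits a nonuniform polynomial dichotomy (i.e. ∥T(t,τ)P(τ)∥ ≤ D(t/τ)^{-λ}τ^ε for t ≥ τ and ∥T(t,τ)Q(τ)∥ ≤ D(τ/t)^{-λ}τ^ε for t ≤ τ) if and only if it admits a polynomial dichotomy with respect to some family of norms ∥·∥_t satisfying ∥x∥ ≤ ∥x∥_t ≤ Ct^ε∥x∥ for some C > 0 and ε ≥ 0. In the forward direction one may take ∥x∥_τ = sup_{t≥τ}(∥T(t,τ)P(τ)x∥(t/τ)^λ) + sup_{t≤τ}(∥T(t,τ)Q(τ)x∥(τ/t)^λ) and C = 2D. -/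
open Set

variable {X : Type*} [NormedAddCommGroup X] [NormedSpace ℝ X] [CompleteSpace X]

/-- Evolution family on `[1,∞)`. -/
def IsEvolutionFamily (T : ℝ → ℝ → X →L[ℝ] X) : Prop :=
  (∀ t : ℝ, 1 ≤ t → T t t = ContinuousLinearMap.id ℝ X) ∧
  (∀ τ s t : ℝ, 1 ≤ τ → τ ≤ s → s ≤ t → (T t s).comp (T s τ) = T t τ) ∧
  ∀ τ : ℝ, 1 ≤ τ → ∀ x : X, ContinuousOn (fun s => T s τ x) (Ici τ)

/-- A family of norms `N t` equivalent to `∥·∥` with constants `C, ε`: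
`∥x∥ ≤ ∥x∥_t ≤ C t^ε ∥x∥`. -/
def IsNormFamily (N : ℝ → X → ℝ) (C ε : ℝ) : Prop :=
  (∀ t : ℝ, ∀ x y : X, N t (x + y) ≤ N t x + N t y) ∧
  (∀ t : ℝ, ∀ a : ℝ, ∀ x : X, N t (a • x) = |a| * N t x) ∧
  ∀ t : ℝ, ∀ x : X, 1 ≤ t → ‖x‖ ≤ N t x ∧ N t x ≤ C * t ^ ε * ‖x‖

/-- Polynomial dichotomy with respect to a family of norms `N t`: projections `P`
commuting with the dynamics, invertible on the kernels, contraction rate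
`D(t/τ)^{-λ}` on `Im P(τ)` and expansion rate `D⁻¹(t/τ)^{λ}` on `Ker P(τ)`
(the latter being the forward reformulation of
`∥T(t,τ)Q(τ)x∥_t ≤ D(τ/t)^{-λ}∥x∥_τ` for `t ≤ τ`). -/
def PolyDichotomyWrt (T : ℝ → ℝ → X →L[ℝ] X) (N : ℝ → X → ℝ) : Prop :=
  ∃ P : ℝ → X →L[ℝ] X, ∃ D lam : ℝ, 0 < D ∧ 0 < lam ∧
    (∀ t : ℝ, 1 ≤ t → (P t).comp (P t) = P t) ∧
    (∀ τ t : ℝ, 1 ≤ τ → τ ≤ t → (P t).comp (T t τ) = (T t τ).comp (P τ)) ∧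
    (∀ τ t : ℝ, 1 ≤ τ → τ ≤ t →
      Set.BijOn (⇑(T t τ)) {v : X | P τ v = 0} {v : X | P t v = 0}) ∧
    (∀ τ t : ℝ, 1 ≤ τ → τ ≤ t → ∀ x : X,
      N t (T t τ (P τ x)) ≤ D * (t / τ) ^ (-lam) * N τ x) ∧
    (∀ τ t : ℝ, 1 ≤ τ → τ ≤ t → ∀ v : X, P τ v = 0 →
      D⁻¹ * (t / τ) ^ lam * N τ v ≤ N t (T t τ v))

/-- Nonuniform polynomial dichotomy: `∥T(t,τ)P(τ)∥ ≤ D(t/τ)^{-λ}τ^ε` for `t ≥ τ` and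
`∥T(t,τ)Q(τ)∥ ≤ D(τ/t)^{-λ}τ^ε` for `t ≤ τ` (here stated in the equivalent forward
form `∥T(t,τ)v∥ ≥ D⁻¹(t/τ)^{λ}t^{-ε}∥v∥` for `v ∈ Ker P(τ)`, `t ≥ τ`). -/
def NonuniformPolyDichotomy (T : ℝ → ℝ → X →L[ℝ] X) : Prop :=
  ∃ P : ℝ → X →L[ℝ] X, ∃ D lam ε : ℝ, 0 < D ∧ 0 < lam ∧ 0 ≤ ε ∧
    (∀ t : ℝ, 1 ≤ t → (P t).comp (P t) = P t) ∧
    (∀ τ t : ℝ, 1 ≤ τ → τ ≤ t → (P t).comp (T t τ) = (T t τ).comp (P τ)) ∧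
    (∀ τ t : ℝ, 1 ≤ τ → τ ≤ t →
      Set.BijOn (⇑(T t τ)) {v : X | P τ v = 0} {v : X | P t v = 0}) ∧
    (∀ τ t : ℝ, 1 ≤ τ → τ ≤ t → ∀ x : X,
      ‖T t τ (P τ x)‖ ≤ D * (t / τ) ^ (-lam) * τ ^ ε * ‖x‖) ∧
    (∀ τ t : ℝ, 1 ≤ τ → τ ≤ t → ∀ v : X, P τ v = 0 →
      D⁻¹ * (t / τ) ^ lam * t ^ (-ε) * ‖v‖ ≤ ‖T t τ v‖)

/-!
The Lyapunov norm `‖x‖_τ = sup_{t ≥ τ} ‖T(t,τ)P(τ)x‖ (t/τ)^λ + sup_{s ≤ τ} ‖T(s,τ)Q(τ)x‖ (τ/s)^λ`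
absorbs the nonuniformity: the dichotomy bounds say that the two suprema are at most `Dτ^ε‖x‖`
and `Dτ^ε‖Q(τ)x‖`, while the terms `t = τ` and `s = τ` give `‖x‖ ≤ ‖x‖_τ`. Moving `x` along the
flow only reindexes the suprema, so in these norms the dichotomy holds with constant `1`.
Conversely, squeezing a dichotomy in norms `‖·‖_t` between `‖·‖` and `C t^ε ‖·‖` gives the
nonuniform bounds with constant `C D`.
-/

theorem csSup_le_csSup_add {S S₁ S₂ : Set ℝ} (hS : S.Nonempty) (h₁ : BddAbove S₁)
    (h₂ : BddAbove S₂) (h : ∀ r ∈ S, ∃ r₁ ∈ S₁, ∃ r₂ ∈ S₂, r ≤ r₁ + r₂) :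
    sSup S ≤ sSup S₁ + sSup S₂ :=
  csSup_le hS fun r hr => by
    obtain ⟨r₁, hr₁, r₂, hr₂, hr⟩ := h r hr
    exact hr.trans (add_le_add (le_csSup h₁ hr₁) (le_csSup h₂ hr₂))

theorem csSup_le_mul_csSup {S S' : Set ℝ} {c : ℝ} (hS : S.Nonempty) (hc : 0 ≤ c)
    (hS' : BddAbove S') (h : ∀ r ∈ S, ∃ r' ∈ S', r ≤ c * r') : sSup S ≤ c * sSup S' :=
  csSup_le hS fun r hr => by
    obtain ⟨r', hr', hr⟩ := h r hr
    exact hr.trans (mul_le_mul_of_nonneg_left (le_csSup hS' hr') hc)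

theorem mul_csSup_le_csSup {S S' : Set ℝ} {c : ℝ} (hS' : S'.Nonempty) (hc : 0 ≤ c)
    (hS : BddAbove S) (h : ∀ r' ∈ S', ∃ r ∈ S, c * r' ≤ r) : c * sSup S' ≤ sSup S := by
  rw [← smul_eq_mul, ← Real.sSup_smul_of_nonneg hc]
  refine csSup_le hS'.smul_set ?_
  rintro _ ⟨r', hr', rfl⟩
  obtain ⟨r, hr, hle⟩ := h r' hr'
  exact hle.trans (le_csSup hS hr)

theorem div_rpow_mul_div_rpow {a b c : ℝ} (ha : 0 ≤ a) (hb : 0 < b) (hc : 0 < c) (p : ℝ) :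
    (a / b) ^ p * (b / c) ^ p = (a / c) ^ p := by
  rw [← Real.mul_rpow (by positivity) (by positivity), div_mul_div_cancel₀ hb.ne']

section Dichotomy

variable {E : Type*} [NormedAddCommGroup E] [NormedSpace ℝ E]
  {T : ℝ → ℝ → E →L[ℝ] E} {P : ℝ → E →L[ℝ] E} {τ s t D lam ε : ℝ}

namespace IsEvolutionFamily

theorem apply_self (hT : IsEvolutionFamily T) (ht : 1 ≤ t) (x : E) : T t t x = x := by
  rw [hT.1 t ht]
  rfl

theorem apply_apply (hT : IsEvolutionFamily T) (hτ : 1 ≤ τ) (hs : τ ≤ s) (ht : s ≤ t) (x : E) :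
    T t s (T s τ x) = T t τ x := by
  rw [← hT.2.1 τ s t hτ hs ht]
  rfl

end IsEvolutionFamily

structure IsDichotomyProjection (T : ℝ → ℝ → E →L[ℝ] E) (P : ℝ → E →L[ℝ] E) : Prop where
  idem : ∀ t : ℝ, 1 ≤ t → (P t).comp (P t) = P t
  comm : ∀ τ t : ℝ, 1 ≤ τ → τ ≤ t → (P t).comp (T t τ) = (T t τ).comp (P τ)
  bijOn : ∀ τ t : ℝ, 1 ≤ τ → τ ≤ t →
    Set.BijOn (⇑(T t τ)) {v : E | P τ v = 0} {v : E | P t v = 0}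

namespace IsDichotomyProjection

theorem apply_apply_self (hP : IsDichotomyProjection T P) (ht : 1 ≤ t) (x : E) :
    P t (P t x) = P t x := by
  rw [← ContinuousLinearMap.comp_apply, hP.idem t ht]

theorem apply_evolution (hP : IsDichotomyProjection T P) (hτ : 1 ≤ τ) (hle : τ ≤ t) (x : E) :
    P t (T t τ x) = T t τ (P τ x) := by
  rw [← ContinuousLinearMap.comp_apply, hP.comm τ t hτ hle, ContinuousLinearMap.comp_apply]

theorem apply_sub_self (hP : IsDichotomyProjection T P) (ht : 1 ≤ t) (x : E) :
    P t (x - P t x) = 0 := by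
  rw [map_sub, hP.apply_apply_self ht, sub_self]

theorem eq_zero_of_evolution_eq_zero (hP : IsDichotomyProjection T P) (hs : 1 ≤ s) (hle : s ≤ τ)
    {w : E} (hw : P s w = 0) (h : T τ s w = 0) : w = 0 :=
  (hP.bijOn s τ hs hle).injOn hw (map_zero (P s)) (h.trans (map_zero _).symm)

end IsDichotomyProjection

structure NonuniformPolyDichotomyWith (T : ℝ → ℝ → E →L[ℝ] E) (P : ℝ → E →L[ℝ] E)
    (D lam ε : ℝ) : Prop extends IsDichotomyProjection T P where
  D_pos : 0 < D
  stable : ∀ τ t : ℝ, 1 ≤ τ → τ ≤ t → ∀ x : E,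
    ‖T t τ (P τ x)‖ ≤ D * (t / τ) ^ (-lam) * τ ^ ε * ‖x‖
  unstable : ∀ τ t : ℝ, 1 ≤ τ → τ ≤ t → ∀ v : E, P τ v = 0 →
    D⁻¹ * (t / τ) ^ lam * t ^ (-ε) * ‖v‖ ≤ ‖T t τ v‖

namespace NonuniformPolyDichotomyWith

theorem norm_mul_rpow_le (h : NonuniformPolyDichotomyWith T P D lam ε) (hτ : 1 ≤ τ) (hle : τ ≤ t)
    (x : E) : ‖T t τ (P τ x)‖ * (t / τ) ^ lam ≤ D * τ ^ ε * ‖x‖ := by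
  have hpos : 0 < t / τ := div_pos (by linarith) (by linarith)
  calc ‖T t τ (P τ x)‖ * (t / τ) ^ lam
      ≤ D * (t / τ) ^ (-lam) * τ ^ ε * ‖x‖ * (t / τ) ^ lam :=
        mul_le_mul_of_nonneg_right (h.stable τ t hτ hle x) (Real.rpow_nonneg hpos.le _)
    _ = D * τ ^ ε * ‖x‖ := by
        rw [Real.rpow_neg hpos.le]
        field_simp [(Real.rpow_pos_of_pos hpos lam).ne']

theorem norm_mul_rpow_le_of_apply_eq_zero (h : NonuniformPolyDichotomyWith T P D lam ε)
    (hs : 1 ≤ s) (hle : s ≤ τ) {w : E} (hw : P s w = 0) :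
    ‖w‖ * (τ / s) ^ lam ≤ D * τ ^ ε * ‖T τ s w‖ := by
  have hτ : 0 < τ ^ ε := Real.rpow_pos_of_pos (by linarith) ε
  have hD := h.D_pos
  have := h.unstable s τ hs hle w hw
  rw [Real.rpow_neg (by linarith)] at this
  calc ‖w‖ * (τ / s) ^ lam = D * τ ^ ε * (D⁻¹ * (τ / s) ^ lam * (τ ^ ε)⁻¹ * ‖w‖) := by
        field_simp
    _ ≤ D * τ ^ ε * ‖T τ s w‖ := by gcongr

end NonuniformPolyDichotomyWith

variable (T P) in
def lyapunovStableSet (lam τ : ℝ) (x : E) : Set ℝ :=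
  (fun t => ‖T t τ (P τ x)‖ * (t / τ) ^ lam) '' Ici τ

variable (T P) in
/-- For `s ≤ τ`, `T(s,τ)` is the inverse of `T(τ,s)` on `Ker P(s)`, so `‖T(s,τ)Q(τ)x‖` is the
norm of the `w ∈ Ker P(s)` with `T(τ,s) w = Q(τ)x`. -/
def lyapunovUnstableSet (lam τ : ℝ) (x : E) : Set ℝ :=
  {r | ∃ s ∈ Icc 1 τ, ∃ w, P s w = 0 ∧ T τ s w = x - P τ x ∧ r = ‖w‖ * (τ / s) ^ lam}

variable (T P) in
noncomputable def lyapunovNorm (lam τ : ℝ) (x : E) : ℝ :=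
  if 1 ≤ τ then sSup (lyapunovStableSet T P lam τ x) + sSup (lyapunovUnstableSet T P lam τ x)
  else ‖x‖

theorem lyapunovStableSet_nonempty (x : E) : (lyapunovStableSet T P lam τ x).Nonempty :=
  nonempty_Ici.image _

theorem norm_apply_mem_lyapunovStableSet (hT : IsEvolutionFamily T) (hτ : 1 ≤ τ) (x : E) :
    ‖P τ x‖ ∈ lyapunovStableSet T P lam τ x :=
  ⟨τ, mem_Ici.2 le_rfl, by
    dsimp only
    rw [hT.apply_self hτ, div_self (by linarith), Real.one_rpow, mul_one]⟩

theorem norm_sub_apply_mem_lyapunovUnstableSet (hT : IsEvolutionFamily T)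
    (hP : IsDichotomyProjection T P) (hτ : 1 ≤ τ) (x : E) :
    ‖x - P τ x‖ ∈ lyapunovUnstableSet T P lam τ x :=
  ⟨τ, ⟨hτ, le_rfl⟩, x - P τ x, hP.apply_sub_self hτ x, hT.apply_self hτ _,
    by rw [div_self (by linarith), Real.one_rpow, mul_one]⟩

theorem lyapunovUnstableSet_nonempty (hT : IsEvolutionFamily T) (hP : IsDichotomyProjection T P)
    (hτ : 1 ≤ τ) (x : E) : (lyapunovUnstableSet T P lam τ x).Nonempty :=
  ⟨_, norm_sub_apply_mem_lyapunovUnstableSet hT hP hτ x⟩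

theorem sSup_lyapunovStableSet_nonneg (hτ : 0 ≤ τ) (x : E) :
    0 ≤ sSup (lyapunovStableSet T P lam τ x) :=
  Real.sSup_nonneg <| by
    rintro _ ⟨t, ht, rfl⟩
    exact mul_nonneg (norm_nonneg _) (Real.rpow_nonneg (div_nonneg (hτ.trans ht) hτ) _)

theorem sSup_lyapunovUnstableSet_nonneg (x : E) : 0 ≤ sSup (lyapunovUnstableSet T P lam τ x) :=
  Real.sSup_nonneg <| by
    rintro _ ⟨s, ⟨hs, hsτ⟩, w, -, -, rfl⟩
    exact mul_nonneg (norm_nonneg _) (Real.rpow_nonneg (div_nonneg (by linarith) (by linarith)) _)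

theorem lyapunovNorm_nonneg (t : ℝ) (x : E) : 0 ≤ lyapunovNorm T P lam t x := by
  unfold lyapunovNorm
  split_ifs with ht
  · exact add_nonneg (sSup_lyapunovStableSet_nonneg (by linarith) x)
      (sSup_lyapunovUnstableSet_nonneg x)
  · exact norm_nonneg x

theorem sSup_lyapunovStableSet_eq_zero {v : E} (hv : P τ v = 0) :
    sSup (lyapunovStableSet T P lam τ v) = 0 := by
  have : lyapunovStableSet T P lam τ v = {0} := by
    simp only [lyapunovStableSet, hv, map_zero, norm_zero, zero_mul]
    exact nonempty_Ici.image_const 0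
  rw [this, csSup_singleton]

theorem sSup_lyapunovUnstableSet_eq_zero (hP : IsDichotomyProjection T P) {x : E}
    (hx : P τ x = x) : sSup (lyapunovUnstableSet T P lam τ x) = 0 := by
  refine le_antisymm (Real.sSup_le ?_ le_rfl) (sSup_lyapunovUnstableSet_nonneg x)
  rintro _ ⟨s, ⟨hs, hsτ⟩, w, hw, hTw, rfl⟩
  rw [hP.eq_zero_of_evolution_eq_zero hs hsτ hw (by rw [hTw, hx, sub_self]), norm_zero, zero_mul]

namespace NonuniformPolyDichotomyWith

theorem bddAbove_lyapunovStableSet (h : NonuniformPolyDichotomyWith T P D lam ε) (hτ : 1 ≤ τ)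
    (x : E) : BddAbove (lyapunovStableSet T P lam τ x) :=
  ⟨D * τ ^ ε * ‖x‖, by
    rintro _ ⟨t, ht, rfl⟩
    exact h.norm_mul_rpow_le hτ ht x⟩

theorem bddAbove_lyapunovUnstableSet (h : NonuniformPolyDichotomyWith T P D lam ε) (x : E) :
    BddAbove (lyapunovUnstableSet T P lam τ x) :=
  ⟨D * τ ^ ε * ‖x - P τ x‖, by
    rintro _ ⟨s, ⟨hs, hsτ⟩, w, hw, hTw, rfl⟩
    simpa only [hTw] using h.norm_mul_rpow_le_of_apply_eq_zero hs hsτ hw⟩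

theorem sSup_lyapunovStableSet_le (h : NonuniformPolyDichotomyWith T P D lam ε) (hτ : 1 ≤ τ)
    (x : E) : sSup (lyapunovStableSet T P lam τ x) ≤ D * τ ^ ε * ‖x‖ :=
  csSup_le (lyapunovStableSet_nonempty x) <| by
    rintro _ ⟨t, ht, rfl⟩
    exact h.norm_mul_rpow_le hτ ht x

theorem sSup_lyapunovUnstableSet_le (h : NonuniformPolyDichotomyWith T P D lam ε) (hτ : 1 ≤ τ)
    (x : E) : sSup (lyapunovUnstableSet T P lam τ x) ≤ D * τ ^ ε * ‖x - P τ x‖ :=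
  Real.sSup_le
    (by
      rintro _ ⟨s, ⟨hs, hsτ⟩, w, hw, hTw, rfl⟩
      simpa only [hTw] using h.norm_mul_rpow_le_of_apply_eq_zero hs hsτ hw)
    (by have := h.D_pos; positivity)

theorem norm_apply_le (h : NonuniformPolyDichotomyWith T P D lam ε) (hT : IsEvolutionFamily T)
    (ht : 1 ≤ t) (x : E) : ‖P t x‖ ≤ D * t ^ ε * ‖x‖ :=
  (le_csSup (h.bddAbove_lyapunovStableSet ht x) (norm_apply_mem_lyapunovStableSet hT ht x)).trans
    (h.sSup_lyapunovStableSet_le ht x)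

theorem sSup_lyapunovStableSet_add_le (h : NonuniformPolyDichotomyWith T P D lam ε) (hτ : 1 ≤ τ)
    (x y : E) : sSup (lyapunovStableSet T P lam τ (x + y)) ≤
      sSup (lyapunovStableSet T P lam τ x) + sSup (lyapunovStableSet T P lam τ y) := by
  refine csSup_le_csSup_add (lyapunovStableSet_nonempty _) (h.bddAbove_lyapunovStableSet hτ x)
    (h.bddAbove_lyapunovStableSet hτ y) ?_
  rintro _ ⟨t, ht, rfl⟩
  refine ⟨_, ⟨t, ht, rfl⟩, _, ⟨t, ht, rfl⟩, ?_⟩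
  dsimp only
  rw [← add_mul, map_add, map_add]
  exact mul_le_mul_of_nonneg_right (norm_add_le _ _)
    (Real.rpow_nonneg (div_nonneg (by linarith [mem_Ici.1 ht]) (by linarith)) _)

theorem sSup_lyapunovUnstableSet_add_le (h : NonuniformPolyDichotomyWith T P D lam ε)
    (hT : IsEvolutionFamily T) (hτ : 1 ≤ τ) (x y : E) :
    sSup (lyapunovUnstableSet T P lam τ (x + y)) ≤
      sSup (lyapunovUnstableSet T P lam τ x) + sSup (lyapunovUnstableSet T P lam τ y) := by
  refine csSup_le_csSup_add (lyapunovUnstableSet_nonempty hT h.toIsDichotomyProjection hτ _)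
    (h.bddAbove_lyapunovUnstableSet x) (h.bddAbove_lyapunovUnstableSet y) ?_
  rintro _ ⟨s, hs, w, hw, hTw, rfl⟩
  obtain ⟨wx, hwx, hTwx⟩ := (h.bijOn s τ hs.1 hs.2).surjOn (h.apply_sub_self hτ x)
  have hwy : P s (w - wx) = 0 := by rw [map_sub, hw, show P s wx = 0 from hwx, sub_zero]
  have hTwy : T τ s (w - wx) = y - P τ y := by
    rw [map_sub, hTw, hTwx, map_add]
    abel
  refine ⟨_, ⟨s, hs, wx, hwx, hTwx, rfl⟩, _, ⟨s, hs, w - wx, hwy, hTwy, rfl⟩, ?_⟩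
  rw [← add_mul]
  refine mul_le_mul_of_nonneg_right ?_ (Real.rpow_nonneg (div_nonneg ?_ ?_) _)
  · simpa using norm_add_le wx (w - wx)
  all_goals linarith [hs.1, hs.2]

theorem sSup_lyapunovStableSet_smul_le (h : NonuniformPolyDichotomyWith T P D lam ε)
    (hτ : 1 ≤ τ) (a : ℝ) (x : E) : sSup (lyapunovStableSet T P lam τ (a • x)) ≤
      |a| * sSup (lyapunovStableSet T P lam τ x) := by
  refine csSup_le_mul_csSup (lyapunovStableSet_nonempty _) (abs_nonneg a)
    (h.bddAbove_lyapunovStableSet hτ x) ?_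
  rintro _ ⟨t, ht, rfl⟩
  refine ⟨_, ⟨t, ht, rfl⟩, le_of_eq ?_⟩
  simp only [map_smul, norm_smul, Real.norm_eq_abs, mul_assoc]

theorem sSup_lyapunovUnstableSet_smul_le (h : NonuniformPolyDichotomyWith T P D lam ε)
    (hT : IsEvolutionFamily T) (hτ : 1 ≤ τ) (a : ℝ) (x : E) :
    sSup (lyapunovUnstableSet T P lam τ (a • x)) ≤
      |a| * sSup (lyapunovUnstableSet T P lam τ x) := by
  refine csSup_le_mul_csSup (lyapunovUnstableSet_nonempty hT h.toIsDichotomyProjection hτ _)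
    (abs_nonneg a) (h.bddAbove_lyapunovUnstableSet x) ?_
  rintro _ ⟨s, hs, w, hw, hTw, rfl⟩
  rw [map_smul, ← smul_sub] at hTw
  rcases eq_or_ne a 0 with rfl | ha
  · have hw0 : w = 0 := h.eq_zero_of_evolution_eq_zero hs.1 hs.2 hw (by rw [hTw, zero_smul])
    exact ⟨_, norm_sub_apply_mem_lyapunovUnstableSet hT h.toIsDichotomyProjection hτ x, by
      simp [hw0]⟩
  · refine ⟨_, ⟨s, hs, a⁻¹ • w, by rw [map_smul, hw, smul_zero], ?_, rfl⟩, le_of_eq ?_⟩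
    · rw [map_smul, hTw, inv_smul_smul₀ ha]
    · rw [norm_smul, norm_inv, Real.norm_eq_abs, ← mul_assoc, ← mul_assoc,
        mul_inv_cancel₀ (abs_ne_zero.2 ha), one_mul]

theorem lyapunovNorm_add_le (h : NonuniformPolyDichotomyWith T P D lam ε)
    (hT : IsEvolutionFamily T) (t : ℝ) (x y : E) :
    lyapunovNorm T P lam t (x + y) ≤ lyapunovNorm T P lam t x + lyapunovNorm T P lam t y := by
  unfold lyapunovNorm
  split_ifs with ht
  · linarith [h.sSup_lyapunovStableSet_add_le ht x y, h.sSup_lyapunovUnstableSet_add_le hT ht x y]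
  · exact norm_add_le x y

theorem lyapunovNorm_smul_le (h : NonuniformPolyDichotomyWith T P D lam ε)
    (hT : IsEvolutionFamily T) (t a : ℝ) (x : E) :
    lyapunovNorm T P lam t (a • x) ≤ ‖a‖ * lyapunovNorm T P lam t x := by
  unfold lyapunovNorm
  split_ifs with ht
  · rw [Real.norm_eq_abs, mul_add]
    exact add_le_add (h.sSup_lyapunovStableSet_smul_le ht a x)
      (h.sSup_lyapunovUnstableSet_smul_le hT ht a x)
  · exact (norm_smul a x).le

theorem lyapunovNorm_smul (h : NonuniformPolyDichotomyWith T P D lam ε)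
    (hT : IsEvolutionFamily T) (t a : ℝ) (x : E) :
    lyapunovNorm T P lam t (a • x) = |a| * lyapunovNorm T P lam t x := by
  have hzero : lyapunovNorm T P lam t 0 = 0 :=
    le_antisymm (by simpa using h.lyapunovNorm_smul_le hT t 0 0) (lyapunovNorm_nonneg t 0)
  have := map_smul_eq_mul (Seminorm.ofSMulLE (lyapunovNorm T P lam t) hzero
    (h.lyapunovNorm_add_le hT t) (h.lyapunovNorm_smul_le hT t)) a x
  rw [Real.norm_eq_abs] at this
  exact this

theorem norm_le_lyapunovNorm (h : NonuniformPolyDichotomyWith T P D lam ε)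
    (hT : IsEvolutionFamily T) (ht : 1 ≤ t) (x : E) : ‖x‖ ≤ lyapunovNorm T P lam t x := by
  rw [lyapunovNorm, if_pos ht]
  calc ‖x‖ ≤ ‖P t x‖ + ‖x - P t x‖ := norm_le_insert' x (P t x)
    _ ≤ _ := add_le_add
      (le_csSup (h.bddAbove_lyapunovStableSet ht x) (norm_apply_mem_lyapunovStableSet hT ht x))
      (le_csSup (h.bddAbove_lyapunovUnstableSet x)
        (norm_sub_apply_mem_lyapunovUnstableSet hT h.toIsDichotomyProjection ht x))

/-- The unstable part is only controlled through `‖Q(t)x‖ ≤ (1 + D t^ε) ‖x‖`, whence the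
constant `2D + D²` and the exponent `2ε`. -/
theorem lyapunovNorm_le (h : NonuniformPolyDichotomyWith T P D lam ε)
    (hT : IsEvolutionFamily T) (hε : 0 ≤ ε) (ht : 1 ≤ t) (x : E) :
    lyapunovNorm T P lam t x ≤ (2 * D + D ^ 2) * t ^ (2 * ε) * ‖x‖ := by
  have hD := h.D_pos
  have htε : 1 ≤ t ^ ε := Real.one_le_rpow ht hε
  have hsq : t ^ (2 * ε) = t ^ ε * t ^ ε := by
    rw [two_mul, Real.rpow_add (by linarith)]
  have hQ : ‖x - P t x‖ ≤ ‖x‖ + D * t ^ ε * ‖x‖ :=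
    (norm_sub_le _ _).trans (add_le_add le_rfl (h.norm_apply_le hT ht x))
  rw [lyapunovNorm, if_pos ht, hsq]
  calc sSup (lyapunovStableSet T P lam t x) + sSup (lyapunovUnstableSet T P lam t x)
      ≤ D * t ^ ε * ‖x‖ + D * t ^ ε * (‖x‖ + D * t ^ ε * ‖x‖) :=
        add_le_add (h.sSup_lyapunovStableSet_le ht x)
          ((h.sSup_lyapunovUnstableSet_le ht x).trans (by gcongr))
    _ = (2 * D * t ^ ε + D ^ 2 * (t ^ ε * t ^ ε)) * ‖x‖ := by ring
    _ ≤ (2 * D * (t ^ ε * t ^ ε) + D ^ 2 * (t ^ ε * t ^ ε)) * ‖x‖ := by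
        gcongr
        exact le_mul_of_one_le_left (by positivity) htε
    _ = (2 * D + D ^ 2) * (t ^ ε * t ^ ε) * ‖x‖ := by ring

theorem isNormFamily_lyapunovNorm (h : NonuniformPolyDichotomyWith T P D lam ε)
    (hT : IsEvolutionFamily T) (hε : 0 ≤ ε) :
    IsNormFamily (lyapunovNorm T P lam) (2 * D + D ^ 2) (2 * ε) :=
  ⟨h.lyapunovNorm_add_le hT, h.lyapunovNorm_smul hT, fun _ x ht =>
    ⟨h.norm_le_lyapunovNorm hT ht x, h.lyapunovNorm_le hT hε ht x⟩⟩

theorem sSup_lyapunovStableSet_evolution_le (h : NonuniformPolyDichotomyWith T P D lam ε)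
    (hT : IsEvolutionFamily T) (hτ : 1 ≤ τ) (hle : τ ≤ t) (x : E) :
    sSup (lyapunovStableSet T P lam t (T t τ (P τ x))) ≤
      (t / τ) ^ (-lam) * sSup (lyapunovStableSet T P lam τ x) := by
  have htτ : 0 < t / τ := div_pos (by linarith) (by linarith)
  refine csSup_le_mul_csSup (lyapunovStableSet_nonempty _) (Real.rpow_nonneg htτ.le _)
    (h.bddAbove_lyapunovStableSet hτ x) ?_
  rintro _ ⟨u, hu, rfl⟩
  refine ⟨_, ⟨u, hle.trans hu, rfl⟩, le_of_eq ?_⟩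
  have hrpow : (u / t) ^ lam * (t / τ) ^ lam = (u / τ) ^ lam :=
    div_rpow_mul_div_rpow (by linarith [mem_Ici.1 hu]) (by linarith) (by linarith) lam
  dsimp only
  rw [h.apply_evolution hτ hle, h.apply_apply_self hτ, hT.apply_apply hτ hle hu, ← hrpow,
    Real.rpow_neg htτ.le]
  field_simp [(Real.rpow_pos_of_pos htτ lam).ne']

theorem le_sSup_lyapunovUnstableSet_evolution (h : NonuniformPolyDichotomyWith T P D lam ε)
    (hT : IsEvolutionFamily T) (hτ : 1 ≤ τ) (hle : τ ≤ t) {v : E} (hv : P τ v = 0) :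
    (t / τ) ^ lam * sSup (lyapunovUnstableSet T P lam τ v) ≤
      sSup (lyapunovUnstableSet T P lam t (T t τ v)) := by
  refine mul_csSup_le_csSup (lyapunovUnstableSet_nonempty hT h.toIsDichotomyProjection hτ v)
    (Real.rpow_nonneg (div_nonneg (by linarith) (by linarith)) _)
    (h.bddAbove_lyapunovUnstableSet _) ?_
  rintro _ ⟨s, hs, w, hw, hTw, rfl⟩
  have hTtw : T t s w = T t τ v - P t (T t τ v) := by
    rw [h.apply_evolution hτ hle, hv, map_zero, sub_zero, ← hT.apply_apply hs.1 hs.2 hle, hTw, hv,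
      sub_zero]
  refine ⟨_, ⟨s, ⟨hs.1, hs.2.trans hle⟩, w, hw, hTtw, rfl⟩, le_of_eq ?_⟩
  have hrpow : (t / τ) ^ lam * (τ / s) ^ lam = (t / s) ^ lam :=
    div_rpow_mul_div_rpow (by linarith) (by linarith) (by linarith [hs.1]) lam
  rw [← hrpow]
  ring

theorem lyapunovNorm_evolution_le (h : NonuniformPolyDichotomyWith T P D lam ε)
    (hT : IsEvolutionFamily T) (hτ : 1 ≤ τ) (hle : τ ≤ t) (x : E) :
    lyapunovNorm T P lam t (T t τ (P τ x)) ≤ (t / τ) ^ (-lam) * lyapunovNorm T P lam τ x := by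
  have hPx : P t (T t τ (P τ x)) = T t τ (P τ x) := by
    rw [h.apply_evolution hτ hle, h.apply_apply_self hτ]
  rw [lyapunovNorm, lyapunovNorm, if_pos (hτ.trans hle), if_pos hτ,
    sSup_lyapunovUnstableSet_eq_zero h.toIsDichotomyProjection hPx, add_zero, mul_add]
  exact le_add_of_le_of_nonneg (h.sSup_lyapunovStableSet_evolution_le hT hτ hle x)
    (mul_nonneg (Real.rpow_nonneg (div_nonneg (by linarith) (by linarith)) _)
      (sSup_lyapunovUnstableSet_nonneg x))

theorem le_lyapunovNorm_evolution (h : NonuniformPolyDichotomyWith T P D lam ε)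
    (hT : IsEvolutionFamily T) (hτ : 1 ≤ τ) (hle : τ ≤ t) {v : E} (hv : P τ v = 0) :
    (t / τ) ^ lam * lyapunovNorm T P lam τ v ≤ lyapunovNorm T P lam t (T t τ v) := by
  rw [lyapunovNorm, lyapunovNorm, if_pos (hτ.trans hle), if_pos hτ,
    sSup_lyapunovStableSet_eq_zero hv, zero_add]
  exact le_add_of_nonneg_of_le (sSup_lyapunovStableSet_nonneg (by linarith) _)
    (h.le_sSup_lyapunovUnstableSet_evolution hT hτ hle hv)

theorem polyDichotomyWrt_lyapunovNorm (h : NonuniformPolyDichotomyWith T P D lam ε)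
    (hT : IsEvolutionFamily T) (hlam : 0 < lam) : PolyDichotomyWrt T (lyapunovNorm T P lam) :=
  ⟨P, 1, lam, one_pos, hlam, h.idem, h.comm, h.bijOn,
    fun _ _ hτ hle x => by simpa only [one_mul] using h.lyapunovNorm_evolution_le hT hτ hle x,
    fun _ _ hτ hle _ hv => by
      simpa only [inv_one, one_mul] using h.le_lyapunovNorm_evolution hT hτ hle hv⟩

end NonuniformPolyDichotomyWith

namespace IsNormFamily

variable {N : ℝ → E → ℝ} {C : ℝ}

theorem norm_le_of_le_mul (hN : IsNormFamily N C ε) (hτ : 1 ≤ τ) (ht : 1 ≤ t) {K : ℝ}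
    (hK : 0 ≤ K) {x y : E} (h : N t y ≤ K * N τ x) : ‖y‖ ≤ C * K * τ ^ ε * ‖x‖ :=
  calc ‖y‖ ≤ K * N τ x := ((hN.2.2 t y ht).1).trans h
    _ ≤ K * (C * τ ^ ε * ‖x‖) := mul_le_mul_of_nonneg_left (hN.2.2 τ x hτ).2 hK
    _ = C * K * τ ^ ε * ‖x‖ := by ring

theorem mul_norm_le_of_mul_le (hN : IsNormFamily N C ε) (hτ : 1 ≤ τ) (ht : 1 ≤ t) {K : ℝ}
    (hK : 0 ≤ K) {x y : E} (h : K * N τ x ≤ N t y) : K * ‖x‖ ≤ C * t ^ ε * ‖y‖ :=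
  (mul_le_mul_of_nonneg_left (hN.2.2 τ x hτ).1 hK).trans (h.trans (hN.2.2 t y ht).2)

theorem nonuniformPolyDichotomy_of_polyDichotomyWrt (hN : IsNormFamily N C ε) (hC : 0 < C)
    (hε : 0 ≤ ε) (h : PolyDichotomyWrt T N) : NonuniformPolyDichotomy T := by
  obtain ⟨P, D, lam, hD, hlam, hPP, hcomm, hbij, hstab, hunst⟩ := h
  refine ⟨P, C * D, lam, ε, mul_pos hC hD, hlam, hε, hPP, hcomm, hbij, ?_, ?_⟩
  · intro τ t hτ hle x
    have hpow : 0 ≤ (t / τ) ^ (-lam) :=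
      Real.rpow_nonneg (div_nonneg (by linarith) (by linarith)) _
    have := hN.norm_le_of_le_mul hτ (hτ.trans hle) (by positivity) (hstab τ t hτ hle x)
    calc ‖T t τ (P τ x)‖ ≤ C * (D * (t / τ) ^ (-lam)) * τ ^ ε * ‖x‖ := this
      _ = C * D * (t / τ) ^ (-lam) * τ ^ ε * ‖x‖ := by ring
  · intro τ t hτ hle v hv
    have ht : 0 < t := by linarith
    have hpow : 0 ≤ (t / τ) ^ lam := Real.rpow_nonneg (div_nonneg ht.le (by linarith)) _
    have hCt : 0 < C * t ^ ε := mul_pos hC (Real.rpow_pos_of_pos ht ε)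
    have := hN.mul_norm_le_of_mul_le hτ (hτ.trans hle) (by positivity) (hunst τ t hτ hle v hv)
    rw [Real.rpow_neg ht.le, mul_inv]
    calc C⁻¹ * D⁻¹ * (t / τ) ^ lam * (t ^ ε)⁻¹ * ‖v‖
        = (C * t ^ ε)⁻¹ * (D⁻¹ * (t / τ) ^ lam * ‖v‖) := by rw [mul_inv]; ring
      _ ≤ ‖T t τ v‖ := by rwa [inv_mul_le_iff₀ hCt]

end IsNormFamily

end Dichotomy

/-- Proposition 1: an evolution family admits a nonuniform polynomial dichotomy iff
it admits a polynomial dichotomy with respect to some family of norms satisfying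
`∥x∥ ≤ ∥x∥_t ≤ Ct^ε∥x∥`. -/
theorem stmt17 (T : ℝ → ℝ → X →L[ℝ] X) (hT : IsEvolutionFamily T) :
    NonuniformPolyDichotomy T ↔
      ∃ N : ℝ → X → ℝ, ∃ C ε : ℝ, 0 < C ∧ 0 ≤ ε ∧
        IsNormFamily N C ε ∧ PolyDichotomyWrt T N := by
  constructor
  · rintro ⟨P, D, lam, ε, hD, hlam, hε, hPP, hcomm, hbij, hstab, hunst⟩
    have h : NonuniformPolyDichotomyWith T P D lam ε := ⟨⟨hPP, hcomm, hbij⟩, hD, hstab, hunst⟩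
    exact ⟨lyapunovNorm T P lam, 2 * D + D ^ 2, 2 * ε, by positivity, by positivity,
      h.isNormFamily_lyapunovNorm hT hε, h.polyDichotomyWrt_lyapunovNorm hT hlam⟩
  · rintro ⟨N, C, ε, hC, hε, hN, hNT⟩
    exact hN.nonuniformPolyDichotomy_of_polyDichotomyWrt hC hε hNT
end
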